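/- Let φx, φy, α, β be real numbers and set M = exp(−φx•(cos α • X + sin α • Y)) · exp(φy•(cos β • X + sin β • Y)) as a product of 2×2 real matrices. Then (M₁₁ + M₂₂)/2 = cosh(φx/2)·cosh(φy/2) − sinh(φx/2)·sinh(φy/2)·cos(α − β). (Applied with α = θx + zx and β = θy + zx, this gives the equation cosh(φ/2)cos(z/2) = cosh(φx/2)cosh(φy/2) − sinh(φx/2)sinh(φy/2)cos(θy−θx) for the cylindrical coordinates (φ,θ,z) of x⁻¹y in SL(2,ℝ).) -/

import Mathlib

/-!
Since `t • (cos a • X + sin a • Y) = (t / 2) • reflMatrix a` and the reflection matrix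
`reflMatrix a` squares to the identity, the exponential series splits into its even and odd parts:
`exp (s • reflMatrix a) = cosh s • 1 + sinh s • reflMatrix a`. The half-trace of the product then
follows from `tr (reflMatrix a) = 0` and `tr (reflMatrix a * reflMatrix b) = 2 cos (a - b)`.
-/

open scoped Matrix

/-- The matrix `X` generating `sl(2,ℝ)`. -/
noncomputable def X : Matrix (Fin 2) (Fin 2) ℝ := (1 / 2 : ℝ) • !![1, 0; 0, -1]

/-- The matrix `Y` generating `sl(2,ℝ)`. -/
noncomputable def Y : Matrix (Fin 2) (Fin 2) ℝ := (1 / 2 : ℝ) • !![0, -1; -1, 0]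

open NormedSpace in
theorem exp_smul_of_mul_self_eq_one {𝔸 : Type*} [NormedRing 𝔸] [NormedAlgebra ℝ 𝔸]
    [CompleteSpace 𝔸] {a : 𝔸} (ha : a * a = 1) (s : ℝ) :
    exp (s • a) = Real.cosh s • (1 : 𝔸) + Real.sinh s • a := by
  have hpow : ∀ n, a ^ (2 * n) = 1 := fun n => by rw [pow_mul, sq, ha, one_pow]
  refine (exp_series_hasSum_exp' (𝕂 := ℝ) (s • a)).unique (HasSum.even_add_odd ?_ ?_)
  · convert (Real.hasSum_cosh s).smul_const (1 : 𝔸) using 2 with n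
    rw [smul_pow, hpow, smul_smul, div_eq_inv_mul]
  · convert (Real.hasSum_sinh s).smul_const a using 2 with n
    rw [smul_pow, pow_succ a, hpow, one_mul, smul_smul, div_eq_inv_mul]

theorem Matrix.exp_smul_of_mul_self_eq_one {n : Type*} [Fintype n] [DecidableEq n]
    {A : Matrix n n ℝ} (hA : A * A = 1) (s : ℝ) :
    NormedSpace.exp (s • A) = Real.cosh s • (1 : Matrix n n ℝ) + Real.sinh s • A :=
  letI := Matrix.linftyOpNormedRing (n := n) (α := ℝ)
  letI := Matrix.linftyOpNormedAlgebra (n := n) (R := ℝ) (α := ℝ)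
  _root_.exp_smul_of_mul_self_eq_one hA s

noncomputable def reflMatrix (a : ℝ) : Matrix (Fin 2) (Fin 2) ℝ :=
  !![Real.cos a, -Real.sin a; -Real.sin a, -Real.cos a]

theorem smul_cos_smul_X_add_sin_smul_Y (t a : ℝ) :
    t • (Real.cos a • X + Real.sin a • Y) = (t / 2) • reflMatrix a := by
  ext i j
  fin_cases i <;> fin_cases j <;> simp [X, Y, reflMatrix] <;> ring

theorem reflMatrix_mul_self (a : ℝ) : reflMatrix a * reflMatrix a = 1 := by
  rw [reflMatrix, Matrix.mul_fin_two, Matrix.one_fin_two]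
  ext i j
  fin_cases i <;> fin_cases j <;> simp [← sq, mul_comm]

theorem trace_reflMatrix (a : ℝ) : (reflMatrix a).trace = 0 := by
  simp [reflMatrix, Matrix.trace_fin_two]

theorem trace_reflMatrix_mul (a b : ℝ) :
    (reflMatrix a * reflMatrix b).trace = 2 * Real.cos (a - b) := by
  simp [reflMatrix, Matrix.trace_fin_two, Real.cos_sub]
  ring

theorem trace_cosh_sinh_reflMatrix_mul (u v a b : ℝ) :
    ((Real.cosh u • 1 + Real.sinh u • reflMatrix a) *
        (Real.cosh v • 1 + Real.sinh v • reflMatrix b)).trace =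
      2 * (Real.cosh u * Real.cosh v + Real.sinh u * Real.sinh v * Real.cos (a - b)) := by
  simp only [add_mul, mul_add, smul_mul_smul_comm, one_mul, mul_one, Matrix.trace_add,
    Matrix.trace_smul, Matrix.trace_one, Fintype.card_fin, trace_reflMatrix, trace_reflMatrix_mul,
    smul_eq_mul]
  ring

/-- The half-trace of
`exp(−φx•(cos α • X + sin α • Y)) · exp(φy•(cos β • X + sin β • Y))` equals
`cosh(φx/2)cosh(φy/2) − sinh(φx/2)sinh(φy/2)cos(α − β)`. -/
theorem sl2_product_half_trace (φx φy α β : ℝ) :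
    ((NormedSpace.exp ((-φx) • (Real.cos α • X + Real.sin α • Y)) *
          NormedSpace.exp (φy • (Real.cos β • X + Real.sin β • Y))) 0 0 +
        (NormedSpace.exp ((-φx) • (Real.cos α • X + Real.sin α • Y)) *
          NormedSpace.exp (φy • (Real.cos β • X + Real.sin β • Y))) 1 1) / 2 =
      Real.cosh (φx / 2) * Real.cosh (φy / 2) -
        Real.sinh (φx / 2) * Real.sinh (φy / 2) * Real.cos (α - β) := by
  rw [← Matrix.trace_fin_two, smul_cos_smul_X_add_sin_smul_Y, smul_cos_smul_X_add_sin_smul_Y,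
    Matrix.exp_smul_of_mul_self_eq_one (reflMatrix_mul_self α),
    Matrix.exp_smul_of_mul_self_eq_one (reflMatrix_mul_self β),
    trace_cosh_sinh_reflMatrix_mul, neg_div, Real.cosh_neg, Real.sinh_neg]
  ring
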